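/- arXiv:2007.01366 — 7 statements merged into one kernel-verified Lean document; each statement's English description precedes it below -/
import Mathlib

section
/- Let I be a finite set with a distinguished element 0, and let S : I × I → ℂ be a symmetric matrix that is invertible, satisfies S(0,0) = 1 and S(0,Y) ≠ 0 for all Y ∈ I. Assume the Galois symmetry property: for every field automorphism σ of ℂ there exists a permutation σ̂ of I such that σ(S(X,Y)/S(0,Y)) = S(X, σ̂(Y))/S(0, σ̂(Y)) for all X, Y ∈ I. Assume moreover transitivity: for every X ∈ I there exists a field automorphism σ of ℂ whose associated permutation σ̂ satisfies σ̂(0) = X. Then for any X ≠ Y in I one has S(X,0)² ≠ S(Y,0)². In particular, S(X,0)² ≠ 1 for all X ≠ 0. -/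
open scoped Matrix

/-- Let `S` be a symmetric invertible complex matrix indexed by a finite set
`I` with distinguished element `z`, with `S z z = 1` and `S z Y ≠ 0` for all `Y`.  Assume the
Galois symmetry property (every field automorphism of `ℂ` permutes the normalized columns) and
transitivity of the induced permutation action.  Then distinct indices have distinct squared
dimensions: `S X z ^ 2 ≠ S Y z ^ 2` for `X ≠ Y`; in particular `S X z ^ 2 ≠ 1` for `X ≠ z`. -/
theorem squared_dims_distinct_of_transitive
    (I : Type*) [Fintype I] [DecidableEq I] (z : I)
    (S : Matrix I I ℂ)
    (hsymm : ∀ X Y : I, S X Y = S Y X)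
    (hinv : IsUnit S)
    (hzz : S z z = 1)
    (hz : ∀ Y : I, S z Y ≠ 0)
    (hgal : ∀ σ : ℂ ≃+* ℂ, ∃ τ : Equiv.Perm I,
      ∀ X Y : I, σ (S X Y / S z Y) = S X (τ Y) / S z (τ Y))
    (htrans : ∀ X : I, ∃ (σ : ℂ ≃+* ℂ) (τ : Equiv.Perm I),
      (∀ A B : I, σ (S A B / S z B) = S A (τ B) / S z (τ B)) ∧ τ z = X) :
    (∀ X Y : I, X ≠ Y → S X z ^ 2 ≠ S Y z ^ 2) ∧
    (∀ X : I, X ≠ z → S X z ^ 2 ≠ 1) := by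
  have main : ∀ X Y : I, X ≠ Y → S X z ^ 2 ≠ S Y z ^ 2 := by
    intro X Y hXY hsq
    -- S X z = ε • S Y z with ε = ±1
    have hfac : (S X z - S Y z) * (S X z + S Y z) = 0 := by ring_nf; linear_combination hsq
    have hε : ∃ ε : ℂ, (ε = 1 ∨ ε = -1) ∧ S X z = ε * S Y z := by
      rcases mul_eq_zero.1 hfac with h | h
      · exact ⟨1, Or.inl rfl, by linear_combination h⟩
      · exact ⟨-1, Or.inr rfl, by linear_combination h⟩
    obtain ⟨ε, hε1, hεXY⟩ := hε
    -- rows X and Y of S are proportional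
    have hrow : ∀ W : I, S X W = ε * S Y W := by
      intro W
      obtain ⟨σ, τ, hστ, hτz⟩ := htrans W
      have hX := hστ X z
      have hY := hστ Y z
      rw [hτz, hzz, div_one] at hX hY
      have hσε : σ ε = ε := by rcases hε1 with rfl | rfl <;> simp
      have : S X W / S z W = ε * (S Y W / S z W) := by
        rw [← hX, ← hY, hεXY, map_mul, hσε]
      have h4 : S X W / S z W * S z W = ε * (S Y W / S z W) * S z W := by rw [this]
      rwa [div_mul_cancel₀ _ (hz W), mul_assoc, div_mul_cancel₀ _ (hz W)] at h4
    -- contradiction with invertibility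
    have hinj := Matrix.vecMul_injective_iff_isUnit.2 hinv
    set v : I → ℂ := fun A => (if A = X then 1 else 0) - ε * (if A = Y then 1 else 0) with hv
    have hvm : v ᵥ* S = 0 := by
      funext W
      simp only [Matrix.vecMul, dotProduct, hv, Pi.zero_apply, sub_mul, mul_assoc,
        ite_mul, one_mul, zero_mul, Finset.sum_sub_distrib, mul_ite, mul_zero,
        Finset.sum_ite_eq', Finset.mem_univ, if_true]
      linear_combination hrow W
    have h0 : ((0 : I → ℂ)) ᵥ* S = 0 := by simp
    have := hinj (hvm.trans h0.symm)
    have hXval := congrFun this X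
    simp [hv, hXY] at hXval
  refine ⟨main, fun X hX h1 => main X z hX (by rw [h1, hzz, one_pow])⟩
end

section
/- Let p be an odd prime, let l be an integer coprime to 2p, and set q = exp(lπi/p), a primitive 2p-th root of unity in ℂ. For an integer j let [j]_q = (q^j − q^{−j})/(q − q^{−1}) denote the quantum integer. Then for every integer m with 0 ≤ m ≤ (p−3)/2, the quantum integer [2m+1]_q is nonzero and there exists a field automorphism σ of ℂ such that σ([2j+1]_q) = [(2j+1)(2m+1)]_q / [2m+1]_q for all integers j with 0 ≤ j ≤ (p−3)/2. -/
/-!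
`q = exp(lπi/p)` is a primitive `2p`-th root of unity and `k = 2m + 1` is prime to `2p`, so `q`
and `q^k` are roots of the same cyclotomic polynomial, i.e. conjugate over `ℚ`. A `ℚ`-automorphism
of the algebraic closure of `ℚ` in `ℂ` moving `q` to `q^k` extends to `ℂ`, because two
uncountable algebraically closed fields of equal cardinality have transcendence bases of equal
cardinality over a countable subfield. Any `σ` with `σ q = q^k` sends `[n]_q` to `[nk]_q / [k]_q`,
and `[k]_q ≠ 0` since `p ∤ k`.
-/

/-- The quantum integer `[j]_q = (q^j - q^{-j})/(q - q⁻¹)`. -/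
noncomputable def qint (q : ℂ) (j : ℤ) : ℂ := (q ^ j - q ^ (-j)) / (q - q⁻¹)

universe u v

open Cardinal in
theorem IsAlgClosed.exists_ringEquiv_comp_eq {k : Type u} {K L : Type v} [Field k] [Countable k]
    [Field K] [Field L] [IsAlgClosed K] [IsAlgClosed L] (hK : ℵ₀ < #K) (hKL : #K = #L)
    (f : k →+* K) (g : k →+* L) : ∃ σ : K ≃+* L, (σ : K →+* L).comp f = g := by
  let : Algebra k K := f.toAlgebra
  let : Algebra k L := g.toAlgebra
  have hk : #k ≤ ℵ₀ := mk_le_aleph0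
  obtain ⟨ι, v, hv⟩ : ∃ (ι : Type v) (v : ι → K), IsTranscendenceBasis k v :=
    exists_isTranscendenceBasis' k K
  obtain ⟨κ, w, hw⟩ : ∃ (κ : Type v) (w : κ → L), IsTranscendenceBasis k w :=
    exists_isTranscendenceBasis' k L
  have hι : #K = #ι := by
    simpa using cardinal_eq_cardinal_transcendence_basis_of_aleph0_lt v hv hk hK
  have hκ : #L = #κ := by
    simpa using cardinal_eq_cardinal_transcendence_basis_of_aleph0_lt w hw hk (hKL ▸ hK)
  obtain ⟨e⟩ := Cardinal.eq.mp (hι.symm.trans (hKL.trans hκ))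
  let := isAlgClosure_of_transcendence_basis v hv
  let := isAlgClosure_of_transcendence_basis w hw
  let E : Algebra.adjoin k (Set.range v) ≃ₐ[k] Algebra.adjoin k (Set.range w) :=
    hv.1.aevalEquiv.symm.trans ((MvPolynomial.renameEquiv k e).trans hw.1.aevalEquiv)
  refine ⟨IsAlgClosure.equivOfEquiv K L E.toRingEquiv, RingHom.ext fun x => ?_⟩
  change _ = algebraMap k L x
  rw [RingHom.comp_apply, show f x = algebraMap k K x from rfl,
    IsScalarTower.algebraMap_apply k (Algebra.adjoin k (Set.range v)) K, RingHom.coe_coe,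
    IsAlgClosure.equivOfEquiv_algebraMap, AlgEquiv.coe_ringEquiv, AlgEquiv.commutes,
    ← IsScalarTower.algebraMap_apply]

open Cardinal in
theorem IsConjRoot.exists_ringEquiv {K : Type*} [Field K] [CharZero K] [IsAlgClosed K]
    (hK : ℵ₀ < #K) {x y : K} (hy : IsIntegral ℚ y) (hxy : IsConjRoot ℚ x y) :
    ∃ σ : K ≃+* K, σ y = x := by
  let A := algebraicClosure ℚ K
  have : IsAlgClosure ℚ A := algebraicClosure.isAlgClosure ℚ K
  have : Countable A := by
    rw [← mk_le_aleph0_iff, ← lift_le_aleph0.{_, 0}]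
    simpa [Cardinal.mkRat] using Algebra.IsAlgebraic.lift_cardinalMk_le_max ℚ A
  let x' : A := ⟨x, mem_algebraicClosure_iff.2 (hxy.symm.isIntegral hy).isAlgebraic⟩
  let y' : A := ⟨y, mem_algebraicClosure_iff.2 hy.isAlgebraic⟩
  obtain ⟨τ, hτ⟩ := ((isConjRoot_algHom_iff (f := A.val) (x := x') (y := y')).1 hxy).exists_algEquiv
  obtain ⟨σ, hσ⟩ := IsAlgClosed.exists_ringEquiv_comp_eq hK rfl (algebraMap A K)
    ((algebraMap A K).comp τ.toRingEquiv.toRingHom)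
  exact ⟨σ, (RingHom.congr_fun hσ y').trans (congrArg Subtype.val hτ)⟩

theorem IsPrimitiveRoot.exists_ringEquiv_complex_apply_eq_pow {ζ : ℂ} {n k : ℕ}
    (hζ : IsPrimitiveRoot ζ n) (hn : 0 < n) (hk : k.Coprime n) :
    ∃ σ : ℂ ≃+* ℂ, σ ζ = ζ ^ k := by
  refine IsConjRoot.exists_ringEquiv (by simpa [Cardinal.mk_complex] using
    Cardinal.aleph0_lt_continuum) (hζ.isIntegral hn).tower_top ?_
  rw [isConjRoot_def, ← Polynomial.cyclotomic_eq_minpoly_rat hζ hn,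
    ← Polynomial.cyclotomic_eq_minpoly_rat (hζ.pow_of_coprime k hk) hn]

theorem Complex.isPrimitiveRoot_exp_int_mul_pi_mul_I_div {n : ℕ} (hn : n ≠ 0) {l : ℤ}
    (hl : IsCoprime l (2 * n)) :
    IsPrimitiveRoot (exp (l * Real.pi * I / n)) (2 * n) := by
  have h : exp (l * Real.pi * I / n) = exp (2 * Real.pi * I / (2 * n : ℕ)) ^ l := by
    rw [← exp_int_mul]
    congr 1
    push_cast
    field_simp
  rw [h]
  refine (isPrimitiveRoot_exp (2 * n) (by omega)).zpow_of_gcd_eq_one l ?_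
  push_cast
  exact Int.isCoprime_iff_gcd_eq_one.mp hl

theorem IsPrimitiveRoot.zpow_sub_zpow_neg_ne_zero {K : Type*} [Field K] {q : K} {n : ℕ}
    (hq : IsPrimitiveRoot q (2 * n)) (hn : n ≠ 0) {a : ℤ} (ha : ¬ (n : ℤ) ∣ a) :
    q ^ a - q ^ (-a) ≠ 0 := by
  have hq0 : q ≠ 0 := hq.ne_zero (by omega)
  intro h
  suffices q ^ (2 * a) = 1 by
    rw [hq.zpow_eq_one_iff_dvd, Nat.cast_mul, Nat.cast_two,
      mul_dvd_mul_iff_left two_ne_zero] at this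
    exact ha this
  rw [two_mul, zpow_add₀ hq0]
  nth_rw 2 [sub_eq_zero.1 h]
  rw [← zpow_add₀ hq0, add_neg_cancel, zpow_zero]

theorem qint_ne_zero {q : ℂ} {n : ℕ} (hq : IsPrimitiveRoot q (2 * n)) (hn : 1 < n) {a : ℤ}
    (ha : ¬ (n : ℤ) ∣ a) : qint q a ≠ 0 := by
  have hn1 : ¬ (n : ℤ) ∣ 1 := fun h => by
    have := Int.le_of_dvd one_pos h
    omega
  refine div_ne_zero (hq.zpow_sub_zpow_neg_ne_zero (by omega) ha) ?_
  simpa using hq.zpow_sub_zpow_neg_ne_zero (by omega) hn1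

theorem map_qint {F : Type*} [FunLike F ℂ ℂ] [RingHomClass F ℂ ℂ] (σ : F) {q : ℂ} {k : ℤ}
    (hσ : σ q = q ^ k) (n : ℤ) : σ (qint q n) = qint q (n * k) / qint q k := by
  rcases eq_or_ne (q - q⁻¹) 0 with h | h
  · simp [qint, h]
  · simp only [qint, map_div₀, map_sub, map_zpow₀, map_inv₀, hσ]
    rw [div_div_div_cancel_right₀ h, ← zpow_mul, ← zpow_mul, ← zpow_neg]
    ring_nf

theorem galois_transitivity_quantum_integers_sl2_general
    (p : ℕ) (hp : p.Prime) (l : ℤ)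
    (hl : IsCoprime l (2 * (p : ℤ))) :
    ∀ m : ℕ, m ≤ (p - 3) / 2 →
      qint (Complex.exp ((l : ℂ) * (Real.pi : ℂ) * Complex.I / (p : ℂ))) (2 * (m : ℤ) + 1) ≠ 0 ∧
      ∃ σ : ℂ ≃+* ℂ, ∀ j : ℕ, j ≤ (p - 3) / 2 →
        σ (qint (Complex.exp ((l : ℂ) * (Real.pi : ℂ) * Complex.I / (p : ℂ))) (2 * (j : ℤ) + 1)) =
          qint (Complex.exp ((l : ℂ) * (Real.pi : ℂ) * Complex.I / (p : ℂ)))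
              ((2 * (j : ℤ) + 1) * (2 * (m : ℤ) + 1)) /
            qint (Complex.exp ((l : ℂ) * (Real.pi : ℂ) * Complex.I / (p : ℂ))) (2 * (m : ℤ) + 1) := by
  intro m hm
  have hmp : 2 * m + 1 < p := by
    have := hp.two_le
    omega
  have hq := Complex.isPrimitiveRoot_exp_int_mul_pi_mul_I_div hp.ne_zero (by exact_mod_cast hl)
  have hp_not_dvd : ¬ p ∣ 2 * m + 1 := fun h => by
    have := Nat.le_of_dvd (by omega) h
    omega
  refine ⟨qint_ne_zero hq hp.one_lt (by exact_mod_cast hp_not_dvd), ?_⟩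
  have hcop : (2 * m + 1).Coprime (2 * p) :=
    (Nat.coprime_two_right.mpr (odd_two_mul_add_one m)).mul_right
      (Nat.coprime_comm.mp (hp.coprime_iff_not_dvd.mpr hp_not_dvd))
  obtain ⟨σ, hσ⟩ := hq.exists_ringEquiv_complex_apply_eq_pow (by simp [hp.pos]) hcop
  exact ⟨σ, fun j _ => map_qint σ (by rw [hσ]; norm_cast) _⟩

/-- Let `p` be an odd prime, `l` coprime to `2p`, and
`q = exp(lπi/p)` (a primitive `2p`-th root of unity).  Then for every `0 ≤ m ≤ (p-3)/2`
the quantum integer `[2m+1]_q` is nonzero and there is a field automorphism `σ` of `ℂ` with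
`σ([2j+1]_q) = [(2j+1)(2m+1)]_q / [2m+1]_q` for all `0 ≤ j ≤ (p-3)/2`. -/
theorem galois_transitivity_quantum_integers_sl2
    (p : ℕ) (hp : p.Prime) (hodd : Odd p) (l : ℤ)
    (hl : IsCoprime l (2 * (p : ℤ))) :
    ∀ m : ℕ, m ≤ (p - 3) / 2 →
      qint (Complex.exp ((l : ℂ) * (Real.pi : ℂ) * Complex.I / (p : ℂ))) (2 * (m : ℤ) + 1) ≠ 0 ∧
      ∃ σ : ℂ ≃+* ℂ, ∀ j : ℕ, j ≤ (p - 3) / 2 →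
        σ (qint (Complex.exp ((l : ℂ) * (Real.pi : ℂ) * Complex.I / (p : ℂ))) (2 * (j : ℤ) + 1)) =
          qint (Complex.exp ((l : ℂ) * (Real.pi : ℂ) * Complex.I / (p : ℂ)))
              ((2 * (j : ℤ) + 1) * (2 * (m : ℤ) + 1)) /
            qint (Complex.exp ((l : ℂ) * (Real.pi : ℂ) * Complex.I / (p : ℂ))) (2 * (m : ℤ) + 1) :=
  galois_transitivity_quantum_integers_sl2_general p hp l hl
end

section
/- Let n ≥ 1, let V be a finite-dimensional complex vector space, and let ρ : SL(2,ℤ) → GL(V) be a group homomorphism whose kernel contains the principal congruence subgroup Γ(n). Let W ⊆ V be a ρ-invariant subspace and let ζ be an eigenvalue of the restriction of ρ(T) to W, where T = [[1,1],[0,1]]. Then for every integer a coprime to n, ζ^{a²} is also an eigenvalue of the restriction of ρ(T) to W. -/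
/-!
Write `u a + v n = 1`. The matrix `γ = [[a, -v], [n, u]]` lies in `SL(2, ℤ)` and is upper
triangular modulo `n` with diagonal `(a, a⁻¹)`, so it conjugates `T` to `T ^ (a²)` modulo `n`.
Since `ρ` factors through `SL(2, ℤ/n)`, `ρ(T)` and `ρ(T) ^ (a²)` are conjugate by `ρ(γ)`, and
`ρ(γ)⁻¹` carries a `ζ`-eigenvector of `ρ(T)` in the invariant subspace `W` to a
`ζ ^ (a²)`-eigenvector of `ρ(T)` in `W`.
-/

open Matrix ModularGroup CongruenceSubgroup
open scoped MatrixGroups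

theorem ModularGroup.exists_conj_T_inv_mul_T_zpow_sq_mem_Gamma (n : ℕ) {a : ℤ}
    (ha : IsCoprime a n) : ∃ γ : SL(2, ℤ), (γ * T * γ⁻¹)⁻¹ * T ^ (a ^ 2) ∈ Gamma n := by
  obtain ⟨u, v, huv⟩ := ha
  obtain ⟨γ, hγ⟩ : ∃ γ : SL(2, ℤ), (γ : Matrix (Fin 2) (Fin 2) ℤ) = !![a, -v; (n : ℤ), u] :=
    ⟨⟨_, by simp [det_fin_two_of]; linarith⟩, rfl⟩
  refine ⟨γ, (MonoidHom.eq_iff _).mp ?_⟩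
  have hua : (u : ZMod n) * a = 1 := by
    simpa using congrArg (Int.cast : ℤ → ZMod n) huv
  rw [map_mul, map_mul, map_inv, eq_mul_inv_iff_mul_eq]
  ext i j
  fin_cases i <;> fin_cases j <;>
    simp [hγ, mul_apply, Fin.sum_univ_two, coe_T_zpow, -map_zpow,
      SpecialLinearGroup.map_apply_coe]
  linear_combination (a : ZMod n) * hua

section Representation

variable {G R M : Type*} [Group G] [CommRing R] [AddCommGroup M] [Module R M]
  (ρ : G →* (Module.End R M)ˣ)

theorem hasEigenvector_map_pow {g : G} {μ : R} {x : M}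
    (hx : (ρ g : Module.End R M).HasEigenvector μ x) (k : ℕ) :
    (ρ (g ^ k) : Module.End R M).HasEigenvector (μ ^ k) x := by
  refine ⟨Module.End.mem_eigenspace_iff.mpr ?_, hx.2⟩
  rw [map_pow, Units.val_pow_eq_pow_val]
  exact hx.pow_apply k

theorem hasEigenvector_map_of_conj {g γ : G} {μ : R} {x : M}
    (hx : (ρ (γ * g * γ⁻¹) : Module.End R M).HasEigenvector μ x) :
    (ρ g : Module.End R M).HasEigenvector μ ((ρ γ⁻¹ : Module.End R M) x) := by
  have hinj : Function.Injective (ρ γ⁻¹ : Module.End R M) :=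
    ((Module.End.isUnit_iff _).mp (Units.isUnit _)).injective
  refine ⟨Module.End.mem_eigenspace_iff.mpr ?_, (hinj.ne_iff' (map_zero _)).mpr hx.2⟩
  calc (ρ g : Module.End R M) ((ρ γ⁻¹ : Module.End R M) x)
      = (ρ γ⁻¹ : Module.End R M) ((ρ (γ * g * γ⁻¹) : Module.End R M) x) := by
        rw [← Module.End.mul_apply, ← Module.End.mul_apply, ← Units.val_mul, ← Units.val_mul,
          ← map_mul, ← map_mul, show γ⁻¹ * (γ * g * γ⁻¹) = g * γ⁻¹ by group]
    _ = μ • (ρ γ⁻¹ : Module.End R M) x := by rw [hx.apply_eq_smul, map_smul]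

end Representation

theorem spectrum_closed_under_galois_squares_general
    (n : ℕ) (V : Type*) [AddCommGroup V] [Module ℂ V]
    (ρ : Matrix.SpecialLinearGroup (Fin 2) ℤ →* (V →ₗ[ℂ] V)ˣ)
    (hker : CongruenceSubgroup.Gamma n ≤ ρ.ker)
    (W : Submodule ℂ V)
    (hW : ∀ g : Matrix.SpecialLinearGroup (Fin 2) ℤ, ∀ x ∈ W, (ρ g : V →ₗ[ℂ] V) x ∈ W)
    (ζ : ℂ)
    (hζ : ∃ x ∈ W, x ≠ 0 ∧ (ρ ModularGroup.T : V →ₗ[ℂ] V) x = ζ • x)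
    (a : ℤ) (ha : IsCoprime a (n : ℤ)) :
    ∃ y ∈ W, y ≠ 0 ∧ (ρ ModularGroup.T : V →ₗ[ℂ] V) y = ζ ^ (a ^ 2) • y := by
  obtain ⟨x, hxW, hx0, hx⟩ := hζ
  have hT : Module.End.HasEigenvector (ρ T : V →ₗ[ℂ] V) ζ x :=
    ⟨Module.End.mem_eigenspace_iff.mpr hx, hx0⟩
  obtain ⟨γ, hγ⟩ := exists_conj_T_inv_mul_T_zpow_sq_mem_Gamma n ha
  have hconj : ρ (T ^ (a ^ 2)) = ρ (γ * T * γ⁻¹) := ρ.eq_iff.mpr (hker hγ)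
  have hsq : a ^ 2 = ((a.natAbs ^ 2 : ℕ) : ℤ) := by rw [Nat.cast_pow, Int.natAbs_sq]
  have hpow := hasEigenvector_map_pow ρ hT (a.natAbs ^ 2)
  rw [← zpow_natCast, ← zpow_natCast, ← hsq, hconj] at hpow
  have hy := hasEigenvector_map_of_conj ρ hpow
  exact ⟨_, hW _ x hxW, hy.2, hy.apply_eq_smul⟩

/-- Let `ρ : SL(2,ℤ) → GL(V)` be a finite-dimensional complex representation
whose kernel contains the principal congruence subgroup `Γ(n)`, let `W` be a `ρ`-invariant
subspace and `ζ` an eigenvalue of `ρ(T)` on `W`.  Then for every integer `a` coprime to `n`,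
`ζ^(a²)` is also an eigenvalue of `ρ(T)` on `W`. -/
theorem spectrum_closed_under_galois_squares
    (n : ℕ) (hn : 1 ≤ n) (V : Type*) [AddCommGroup V] [Module ℂ V] [FiniteDimensional ℂ V]
    (ρ : Matrix.SpecialLinearGroup (Fin 2) ℤ →* (V →ₗ[ℂ] V)ˣ)
    (hker : CongruenceSubgroup.Gamma n ≤ ρ.ker)
    (W : Submodule ℂ V)
    (hW : ∀ g : Matrix.SpecialLinearGroup (Fin 2) ℤ, ∀ x ∈ W, (ρ g : V →ₗ[ℂ] V) x ∈ W)
    (ζ : ℂ)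
    (hζ : ∃ x ∈ W, x ≠ 0 ∧ (ρ ModularGroup.T : V →ₗ[ℂ] V) x = ζ • x)
    (a : ℤ) (ha : IsCoprime a (n : ℤ)) :
    ∃ y ∈ W, y ≠ 0 ∧ (ρ ModularGroup.T : V →ₗ[ℂ] V) y = ζ ^ (a ^ 2) • y :=
  spectrum_closed_under_galois_squares_general n V ρ hker W hW ζ hζ a ha
end

section
/- Let n ≥ 1, let V be a finite-dimensional complex vector space, and let ρ : SL(2,ℤ) → GL(V) be a group homomorphism whose kernel contains the principal congruence subgroup Γ(n). Let W be a nonzero ρ-invariant subspace, let m be the multiplicative order of the restriction of ρ(T) to W (so m divides n), and suppose that: (i) dim W = φ₂(m), the number of squares in (ℤ/mℤ)ˣ, and (ii) the set of eigenvalues of ρ(T) restricted to W equals {ζ^{a²} : a an integer coprime to m} for some primitive m-th root of unity ζ. Then W is irreducible: the only ρ-invariant subspaces of W are 0 and W itself. -/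
/-!
Let `v ∈ U` be an eigenvector of `ρ(T)`; its eigenvalue is `ζ ^ a²` with `a` prime to `m`.
For `x` prime to `n` some `γ ∈ SL(2,ℤ)` satisfies `Tγ ≡ γT^(x²)` modulo `Γ(n)`, so `ρ(γ)v ∈ U`
is an eigenvector with eigenvalue `ζ ^ (a²x²)`. Since units mod `m` lift to units mod `n`, every
`ζ ^ b²` with `b` prime to `m` occurs, giving `φ₂(m)` distinct eigenvalues of `ρ(T)` on `U`, so
`dim U ≥ φ₂(m) = dim W`.
-/

/-- `phi2 m` is the number of squares in the unit group `(ℤ/mℤ)ˣ`. -/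
noncomputable def phi2 (m : ℕ) : ℕ := Nat.card (Set.range fun a : (ZMod m)ˣ => a ^ 2)

namespace IsPrimitiveRoot

variable {G₀ : Type*} [CommGroupWithZero G₀] {ζ : G₀} {m : ℕ} [NeZero m]

theorem zpow_eq_zpow_iff (hζ : IsPrimitiveRoot ζ m) {i j : ℤ} :
    ζ ^ i = ζ ^ j ↔ (i : ZMod m) = j := by
  rw [ZMod.intCast_eq_intCast_iff_dvd_sub, ← hζ.zpow_eq_one_iff_dvd,
    zpow_sub₀ (hζ.ne_zero (NeZero.ne m)),
    div_eq_one_iff_eq (zpow_ne_zero _ (hζ.ne_zero (NeZero.ne m))), eq_comm]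

theorem zpow_eq_pow_val (hζ : IsPrimitiveRoot ζ m) (j : ℤ) : ζ ^ j = ζ ^ (j : ZMod m).val := by
  rw [← zpow_natCast, hζ.zpow_eq_zpow_iff]
  simp

theorem pow_val_injective (hζ : IsPrimitiveRoot ζ m) :
    Function.Injective fun x : ZMod m => ζ ^ x.val :=
  fun x y h => ZMod.val_injective m (hζ.pow_inj (ZMod.val_lt x) (ZMod.val_lt y) h)

theorem zpow_sq_eq_pow_sq (hζ : IsPrimitiveRoot ζ m) {a b : ℤ} {k : ℕ}
    (hab : (a : ZMod m) * k = b) : ζ ^ (b ^ 2) = (ζ ^ (a ^ 2)) ^ (k ^ 2) := by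
  rw [← zpow_natCast, ← zpow_mul, hζ.zpow_eq_zpow_iff]
  push_cast
  rw [← hab]
  ring

theorem ncard_setOf_zpow_sq (hζ : IsPrimitiveRoot ζ m) :
    {μ : G₀ | ∃ a : ℤ, IsCoprime a m ∧ μ = ζ ^ (a ^ 2)}.ncard = phi2 m := by
  have himage : {μ : G₀ | ∃ a : ℤ, IsCoprime a m ∧ μ = ζ ^ (a ^ 2)} =
      (fun u : (ZMod m)ˣ => ζ ^ (u : ZMod m).val) '' Set.range fun u => u ^ 2 := by
    ext μ
    simp only [Set.mem_ofPred_eq, Set.mem_image, Set.exists_range_iff]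
    constructor
    · rintro ⟨a, ha, rfl⟩
      exact ⟨ZMod.unitOfIsCoprime a ha, by simp [hζ.zpow_eq_pow_val (a ^ 2)]⟩
    · rintro ⟨u, rfl⟩
      refine ⟨(u : ZMod m).val, Nat.isCoprime_iff_coprime.2 (ZMod.val_coe_unit_coprime u), ?_⟩
      simp [hζ.zpow_eq_pow_val]
  rw [himage, Set.ncard_image_of_injective _ (fun _ _ h => Units.ext (hζ.pow_val_injective h)),
    phi2, Nat.card_coe_set_eq]

end IsPrimitiveRoot

theorem ZMod.exists_coprime_mul_eq {m n : ℕ} [NeZero n] (hmn : m ∣ n) {a b : ℤ}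
    (ha : IsCoprime a m) (hb : IsCoprime b m) :
    ∃ x : ℕ, x.Coprime n ∧ (a : ZMod m) * x = b := by
  obtain ⟨u, hu⟩ := ZMod.unitsMap_surjective hmn
    ((ZMod.unitOfIsCoprime a ha)⁻¹ * ZMod.unitOfIsCoprime b hb)
  refine ⟨(u : ZMod n).val, ZMod.val_coe_unit_coprime u, ?_⟩
  have hx : ((u : ZMod n).val : ZMod m) = ZMod.unitsMap hmn u := by
    rw [ZMod.unitsMap_val, ZMod.natCast_val]
  rw [hx, hu, Units.val_mul, ← mul_assoc, ← ZMod.coe_unitOfIsCoprime a ha,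
    Units.mul_inv, one_mul, ZMod.coe_unitOfIsCoprime]

namespace Module.End

variable {K V : Type*} [Field K] [AddCommGroup V] [Module K V]

theorem HasEigenvector.pow_eq_one {f : End K V} {μ : K} {x : V} {n : ℕ} (hf : f ^ n = 1)
    (hx : f.HasEigenvector μ x) : μ ^ n = 1 :=
  smul_left_injective K hx.2 <| by simpa [hf] using (hx.pow_apply n).symm

theorem HasEigenvector.apply_of_mul_eq_mul_pow {f g : End K V} {k : ℕ} (hg : Function.Injective g)
    (hfg : f * g = g * f ^ k) {μ : K} {x : V} (hx : f.HasEigenvector μ x) :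
    f.HasEigenvector (μ ^ k) (g x) := by
  refine hasEigenvector_iff.2 ⟨mem_eigenspace_iff.2 ?_, (map_ne_zero_iff g hg).2 hx.2⟩
  rw [← mul_apply, hfg, mul_apply, hx.pow_apply, map_smul]

theorem exists_hasEigenvector_mem [IsAlgClosed K] [FiniteDimensional K V] (f : End K V)
    {U : Submodule K V} (hU : U ≠ ⊥) (hfU : ∀ x ∈ U, f x ∈ U) :
    ∃ μ, ∃ x ∈ U, f.HasEigenvector μ x := by
  have : Nontrivial U := Submodule.nontrivial_iff_ne_bot.2 hU
  obtain ⟨μ, hμ⟩ := exists_eigenvalue (f.restrict hfU)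
  obtain ⟨v, hv⟩ := hμ.exists_hasEigenvector
  refine ⟨μ, v, v.2, hasEigenvector_iff.2 ⟨mem_eigenspace_iff.2 ?_, ?_⟩⟩
  · exact congrArg Subtype.val hv.apply_eq_smul
  · exact fun h => hv.2 (Subtype.ext h)

theorem ncard_le_finrank_of_hasEigenvector [FiniteDimensional K V] (f : End K V)
    (U : Submodule K V) {S : Set K} (hS : ∀ μ ∈ S, ∃ x ∈ U, f.HasEigenvector μ x) :
    S.ncard ≤ finrank K U := by
  choose x hxU hx using hS
  rcases S.finite_or_infinite with hfin | hinf
  · have : Fintype S := hfin.fintype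
    have hli : LinearIndependent K fun μ : S => (⟨x μ μ.2, hxU μ μ.2⟩ : U) :=
      LinearIndependent.of_comp U.subtype <| f.eigenvectors_linearIndependent' _
        Subtype.val_injective _ fun μ => hx μ μ.2
    rw [← Nat.card_coe_set_eq, Nat.card_eq_fintype_card]
    exact hli.fintype_card_le_finrank
  · simp [hinf.ncard]

end Module.End

namespace ModularGroup

open CongruenceSubgroup

/-- Modulo `n`, `γ` is upper triangular with diagonal `(x⁻¹, x)`, so it conjugates `T` to
`T ^ x²`. -/
theorem exists_T_mul_eq_mul_T_pow_sq_mul {n x : ℕ} (hx : x.Coprime n) :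
    ∃ γ : Matrix.SpecialLinearGroup (Fin 2) ℤ, ∃ δ ∈ Gamma n, T * γ = γ * T ^ (x ^ 2) * δ := by
  obtain ⟨a, y, hay⟩ := Nat.isCoprime_iff_coprime.2 hx
  let γ : Matrix.SpecialLinearGroup (Fin 2) ℤ :=
    ⟨!![a, -y; n, x], by rw [Matrix.det_fin_two_of]; linear_combination hay⟩
  refine ⟨γ, (γ * T ^ (x ^ 2))⁻¹ * (T * γ), ?_, by group⟩
  rw [Gamma_mem', map_mul, map_inv, inv_mul_eq_one]
  have hay' : (a * x + y * n : ZMod n) = 1 := by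
    exact_mod_cast congrArg (Int.cast : ℤ → ZMod n) hay
  ext i j
  simp only [Matrix.SpecialLinearGroup.map_apply_coe, RingHom.mapMatrix_apply, Matrix.map_apply,
    Matrix.SpecialLinearGroup.coe_mul, ← zpow_natCast, coe_T_zpow, coe_T]
  fin_cases i <;> fin_cases j <;> simp [γ, Matrix.mul_apply, Fin.sum_univ_two]
  linear_combination (x : ZMod n) * hay' - (x * y : ZMod n) * ZMod.natCast_self n

variable {G : Type*} [Group G] {n : ℕ} {ρ : Matrix.SpecialLinearGroup (Fin 2) ℤ →* G}

theorem map_T_pow_eq_one (hker : Gamma n ≤ ρ.ker) : ρ T ^ n = 1 := by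
  rw [← map_pow, ← zpow_natCast]
  exact hker (by simpa using ModularGroup_T_pow_mem_Gamma n n dvd_rfl)

theorem exists_map_T_mul_eq_mul_map_T_pow_sq (hker : Gamma n ≤ ρ.ker) {x : ℕ}
    (hx : x.Coprime n) : ∃ γ, ρ T * ρ γ = ρ γ * ρ T ^ (x ^ 2) := by
  obtain ⟨γ, δ, hδ, hγ⟩ := exists_T_mul_eq_mul_T_pow_sq_mul hx
  exact ⟨γ, by rw [← map_mul, hγ, map_mul, hker hδ, mul_one, map_mul, map_pow]⟩

end ModularGroup

open ModularGroup in
theorem Module.End.exists_hasEigenvector_pow_sq_mem {K V : Type*} [Field K] [AddCommGroup V]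
    [Module K V] {n : ℕ} {ρ : Matrix.SpecialLinearGroup (Fin 2) ℤ →* (V →ₗ[K] V)ˣ}
    (hker : CongruenceSubgroup.Gamma n ≤ ρ.ker) {U : Submodule K V}
    (hU : ∀ g, ∀ v ∈ U, (ρ g : V →ₗ[K] V) v ∈ U) {μ : K} {v : V} (hvU : v ∈ U)
    (hv : HasEigenvector (ρ T : V →ₗ[K] V) μ v) {x : ℕ} (hx : x.Coprime n) :
    ∃ w ∈ U, HasEigenvector (ρ T : V →ₗ[K] V) (μ ^ (x ^ 2)) w := by
  obtain ⟨γ, hγ⟩ := exists_map_T_mul_eq_mul_map_T_pow_sq hker hx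
  have hrel : (ρ T : End K V) * ρ γ = ρ γ * (ρ T : End K V) ^ (x ^ 2) := by
    rw [← Units.val_mul, hγ, Units.val_mul, Units.val_pow_eq_pow_val]
  have hinj : Function.Injective (ρ γ : End K V) :=
    ((isUnit_iff _).1 (ρ γ).isUnit).injective
  exact ⟨_, hU γ v hvU, hv.apply_of_mul_eq_mul_pow hinj hrel⟩

theorem minimal_subrepresentation_irreducible_general
    (n : ℕ) (hn : 1 ≤ n) (V : Type*) [AddCommGroup V] [Module ℂ V] [FiniteDimensional ℂ V]
    (ρ : Matrix.SpecialLinearGroup (Fin 2) ℤ →* (V →ₗ[ℂ] V)ˣ)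
    (hker : CongruenceSubgroup.Gamma n ≤ ρ.ker)
    (W : Submodule ℂ V)
    (m : ℕ)
    (hdim : Module.finrank ℂ W = phi2 m)
    (ζ : ℂ) (hζ : IsPrimitiveRoot ζ m)
    (hspec : {μ : ℂ | ∃ x ∈ W, x ≠ 0 ∧ (ρ ModularGroup.T : V →ₗ[ℂ] V) x = μ • x}
      = {μ : ℂ | ∃ a : ℤ, IsCoprime a (m : ℤ) ∧ μ = ζ ^ (a ^ 2)}) :
    ∀ U : Submodule ℂ V, U ≤ W →
      (∀ g : Matrix.SpecialLinearGroup (Fin 2) ℤ, ∀ x ∈ U, (ρ g : V →ₗ[ℂ] V) x ∈ U) →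
      U = ⊥ ∨ U = W := by
  intro U hUW hU
  refine or_iff_not_imp_left.2 fun hU0 => ?_
  have : NeZero n := ⟨by omega⟩
  set τ : Module.End ℂ V := (ρ ModularGroup.T : V →ₗ[ℂ] V)
  set E := {μ : ℂ | ∃ a : ℤ, IsCoprime a (m : ℤ) ∧ μ = ζ ^ (a ^ 2)}
  have hmn : m ∣ n := by
    obtain ⟨x, -, hx0, hx⟩ : ζ ∈ {μ : ℂ | ∃ x ∈ W, x ≠ 0 ∧ τ x = μ • x} :=
      hspec ▸ ⟨1, isCoprime_one_left, by simp⟩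
    have hτn : τ ^ n = 1 := by
      rw [← Units.val_pow_eq_pow_val, ModularGroup.map_T_pow_eq_one hker, Units.val_one]
    exact hζ.dvd_of_pow_eq_one n <|
      (Module.End.hasEigenvector_iff.2 ⟨Module.End.mem_eigenspace_iff.2 hx, hx0⟩).pow_eq_one hτn
  have : NeZero m := ⟨fun h => by simp [h] at hmn; omega⟩
  obtain ⟨μ, x, hxU, hx⟩ := τ.exists_hasEigenvector_mem hU0 (hU ModularGroup.T)
  obtain ⟨a, ha, rfl⟩ : μ ∈ E := hspec ▸ ⟨x, hUW hxU, hx.2, hx.apply_eq_smul⟩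
  have hE : ∀ ν ∈ E, ∃ y ∈ U, τ.HasEigenvector ν y := by
    rintro _ ⟨b, hb, rfl⟩
    obtain ⟨k, hk, hab⟩ := ZMod.exists_coprime_mul_eq hmn ha hb
    rw [hζ.zpow_sq_eq_pow_sq hab]
    exact Module.End.exists_hasEigenvector_pow_sq_mem hker hU hxU hx hk
  apply Submodule.eq_of_le_of_finrank_le hUW
  rw [hdim, ← hζ.ncard_setOf_zpow_sq]
  exact τ.ncard_le_finrank_of_hasEigenvector U hE

/-- A minimal subrepresentation of a congruence representation of `SL(2,ℤ)`
is irreducible: if `W` is a nonzero invariant subspace on which `ρ(T)` has order `m`,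
`dim W = φ₂(m)`, and the eigenvalues of `ρ(T)` on `W` are exactly `{ζ^(a²) : gcd(a,m)=1}` for
some primitive `m`-th root of unity `ζ`, then the only invariant subspaces of `W` are `0`
and `W`. -/
theorem minimal_subrepresentation_irreducible
    (n : ℕ) (hn : 1 ≤ n) (V : Type*) [AddCommGroup V] [Module ℂ V] [FiniteDimensional ℂ V]
    (ρ : Matrix.SpecialLinearGroup (Fin 2) ℤ →* (V →ₗ[ℂ] V)ˣ)
    (hker : CongruenceSubgroup.Gamma n ≤ ρ.ker)
    (W : Submodule ℂ V) (hWne : W ≠ ⊥)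
    (hW : ∀ g : Matrix.SpecialLinearGroup (Fin 2) ℤ, ∀ x ∈ W, (ρ g : V →ₗ[ℂ] V) x ∈ W)
    (hWT : ∀ x ∈ W, (ρ ModularGroup.T : V →ₗ[ℂ] V) x ∈ W)
    (m : ℕ)
    (hm : m = orderOf ((ρ ModularGroup.T : V →ₗ[ℂ] V).restrict hWT : Module.End ℂ W))
    (hdim : Module.finrank ℂ W = phi2 m)
    (ζ : ℂ) (hζ : IsPrimitiveRoot ζ m)
    (hspec : {μ : ℂ | ∃ x ∈ W, x ≠ 0 ∧ (ρ ModularGroup.T : V →ₗ[ℂ] V) x = μ • x}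
      = {μ : ℂ | ∃ a : ℤ, IsCoprime a (m : ℤ) ∧ μ = ζ ^ (a ^ 2)}) :
    ∀ U : Submodule ℂ V, U ≤ W →
      (∀ g : Matrix.SpecialLinearGroup (Fin 2) ℤ, ∀ x ∈ U, (ρ g : V →ₗ[ℂ] V) x ∈ U) →
      U = ⊥ ∨ U = W :=
  minimal_subrepresentation_irreducible_general n hn V ρ hker W m hdim ζ hζ hspec
end

section
/- For every integer k ≥ 1, the number 2(k+1) divides Euler's totient φ(8(k+1)) if and only if k+1 = 2^x for some integer x ≥ 1 (equivalently, k = 2^x − 1). -/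
/-!
Write `n = 2 ^ a * m` with `m` odd. Then `φ (8 * n) = 2 ^ (a + 2) * φ m` while `2 * n = 2 ^ (a + 1) * m`,
so the divisibility reduces to `m ∣ 2 * φ m`, i.e. (as `m` is odd) `m ∣ φ m`. Since `0 < φ m < m`
whenever `m > 1`, this forces `m = 1`, i.e. `n` is a power of two.
-/

namespace Nat

theorem dvd_totient_iff_eq_one {n : ℕ} (hn : n ≠ 0) : n ∣ φ n ↔ n = 1 := by
  refine ⟨fun h => ?_, fun h => by simp [h]⟩
  by_contra hne
  exact (totient_lt n (by omega)).not_ge (le_of_dvd (totient_pos.mpr (by omega)) h)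

theorem totient_two_pow_succ_mul_of_odd {m : ℕ} (hm : Odd m) (a : ℕ) :
    φ (2 ^ (a + 1) * m) = 2 ^ a * φ m := by
  rw [totient_mul (hm.coprime_two_left.pow_left _),
    totient_prime_pow_succ prime_two]
  norm_num

theorem two_mul_dvd_totient_eight_mul_iff {n : ℕ} (hn : n ≠ 0) :
    2 * n ∣ φ (8 * n) ↔ ∃ a, n = 2 ^ a := by
  obtain ⟨a, m, hm, rfl⟩ := exists_eq_two_pow_mul_odd hn
  have hcop : Coprime m 2 := hm.coprime_two_right
  have htot : φ (8 * (2 ^ a * m)) = 2 ^ (a + 1) * (2 * φ m) := by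
    rw [show 8 * (2 ^ a * m) = 2 ^ (a + 2 + 1) * m by ring,
      totient_two_pow_succ_mul_of_odd hm]
    ring
  calc 2 * (2 ^ a * m) ∣ φ (8 * (2 ^ a * m))
      ↔ 2 ^ (a + 1) * m ∣ 2 ^ (a + 1) * (2 * φ m) := by rw [htot, ← mul_assoc, ← pow_succ']
    _ ↔ m ∣ φ m := by rw [Nat.mul_dvd_mul_iff_left (by positivity), hcop.dvd_mul_left]
    _ ↔ m = 1 := dvd_totient_iff_eq_one hm.pos.ne'
    _ ↔ ∃ b, 2 ^ a * m = 2 ^ b := by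
      refine ⟨fun h => ⟨a, by rw [h, mul_one]⟩, fun ⟨b, hb⟩ => ?_⟩
      exact (hcop.pow_right b).eq_one_of_dvd (hb ▸ dvd_mul_left m _)

end Nat

/-- For every integer `k ≥ 1`, `2(k+1)` divides `φ(8(k+1))` if and only if
`k + 1 = 2^x` for some `x ≥ 1` (equivalently `k = 2^x - 1`). -/
theorem totient_divisibility_iff_pow_two
    (k : ℕ) (hk : 1 ≤ k) :
    (2 * (k + 1)) ∣ Nat.totient (8 * (k + 1)) ↔ ∃ x : ℕ, 1 ≤ x ∧ k + 1 = 2 ^ x := by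
  rw [Nat.two_mul_dvd_totient_eight_mul_iff k.succ_ne_zero]
  constructor
  · rintro ⟨x, hx⟩
    refine ⟨x, Nat.one_le_iff_ne_zero.mpr ?_, hx⟩
    rintro rfl
    omega
  · rintro ⟨x, -, hx⟩
    exact ⟨x, hx⟩
end

section
/- Let x ≥ 1 be an integer, set k = 2^x − 1, let l be an odd integer, and let q = exp(lπi/(4(k+1))), a primitive 8(k+1)-th root of unity in ℂ. For an integer j let [j]_q = (q^j − q^{−j})/(q − q^{−1}) denote the quantum integer. Then for every integer m with 0 ≤ m ≤ k, the quantum integer [2m+1]_q is nonzero and there exists a field automorphism σ of ℂ such that σ([2j+1]_q) = [(2j+1)(2m+1)]_q / [2m+1]_q for all integers j with 0 ≤ j ≤ k. -/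
theorem IsAlgClosed.exists_ringEquiv_extension {R K : Type*} [CommRing R] [Field K]
    [IsAlgClosed K] (i : R →+* K) (hi : Function.Injective i) (g : R ≃+* R) :
    ∃ σ : K ≃+* K, ∀ z, σ (i z) = i (g z) := by
  let : Algebra R K := i.toAlgebra
  have : FaithfulSMul R K := (faithfulSMul_iff_algebraMap_injective R K).mpr hi
  obtain ⟨s, hs⟩ := exists_isTranscendenceBasis R K
  let := isAlgClosure_of_transcendence_basis _ hs
  -- `K` is an algebraic closure of the polynomial ring `R[s]`, on which `g` acts coefficientwise.
  let e := hs.1.aevalEquiv.symm.toRingEquiv.trans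
    ((MvPolynomial.mapEquiv s g).trans hs.1.aevalEquiv.toRingEquiv)
  refine ⟨IsAlgClosure.equivOfEquiv K K e, fun z => ?_⟩
  have hC (w : R) : algebraMap R (Algebra.adjoin R (Set.range ((↑) : s → K))) w =
      hs.1.aevalEquiv (MvPolynomial.C w) := by
    rw [← MvPolynomial.algebraMap_eq, AlgEquiv.commutes]
  have he : e (algebraMap R _ z) = algebraMap R _ (g z) := by
    simp [e, hC, MvPolynomial.mapEquiv_apply]
  change IsAlgClosure.equivOfEquiv K K e (algebraMap R K z) = algebraMap R K (g z)
  rw [IsScalarTower.algebraMap_apply R (Algebra.adjoin R (Set.range ((↑) : s → K))) K,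
    IsAlgClosure.equivOfEquiv_algebraMap, he, ← IsScalarTower.algebraMap_apply]

theorem IsPrimitiveRoot.exists_ringEquiv_apply_eq_pow {K : Type*} [Field K] [CharZero K]
    [IsAlgClosed K] {q : K} {N : ℕ} [NeZero N] (hq : IsPrimitiveRoot q N) {u : ℕ}
    (hu : u.Coprime N) : ∃ σ : K ≃+* K, σ q = q ^ u := by
  let F := Algebra.adjoin ℚ {q}
  have : IsCyclotomicExtension {N} ℚ F := hq.adjoin_isCyclotomicExtension ℚ
  let ζ : F := ⟨q, Algebra.subset_adjoin rfl⟩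
  have hζ : IsPrimitiveRoot ζ N := IsPrimitiveRoot.coe_submonoidClass_iff.mp hq
  have hζu : IsPrimitiveRoot (ζ ^ u) N := hζ.pow_of_coprime u hu
  have hirr : Irreducible (Polynomial.cyclotomic N ℚ) :=
    Polynomial.cyclotomic.irreducible_rat (NeZero.pos N)
  have hmin : minpoly ℚ (hζ.powerBasis ℚ).gen = minpoly ℚ (hζu.powerBasis ℚ).gen := by
    rw [powerBasis_gen, powerBasis_gen, ← hζ.minpoly_eq_cyclotomic_of_irreducible hirr,
      ← hζu.minpoly_eq_cyclotomic_of_irreducible hirr]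
  let g := (hζ.powerBasis ℚ).equivOfMinpoly (hζu.powerBasis ℚ) hmin
  have hg : g ζ = ζ ^ u := by
    simpa only [powerBasis_gen] using (hζ.powerBasis ℚ).equivOfMinpoly_gen (hζu.powerBasis ℚ) hmin
  obtain ⟨σ, hσ⟩ :=
    IsAlgClosed.exists_ringEquiv_extension F.val.toRingHom Subtype.val_injective g.toRingEquiv
  exact ⟨σ, by simpa [hg] using hσ ζ⟩

theorem Complex.isPrimitiveRoot_exp_mul_pi_mul_I_div {l : ℤ} {n : ℕ} (hn : n ≠ 0)
    (hl : IsCoprime l (2 * n : ℕ)) :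
    IsPrimitiveRoot (exp (l * Real.pi * I / n)) (2 * n) := by
  convert isPrimitiveRoot_exp_of_isCoprime l (2 * n) (by positivity) hl using 2
  push_cast
  ring

theorem IsPrimitiveRoot.zpow_sub_zpow_neg_ne_zero_s12 {K : Type*} [Field K] {q : K} {N : ℕ}
    [NeZero N] (hq : IsPrimitiveRoot q N) (hN : 4 ∣ N) {t : ℤ} (ht : Odd t) :
    q ^ t - q ^ (-t) ≠ 0 := by
  intro h
  have hq0 : q ≠ 0 := hq.ne_zero (NeZero.ne N)
  have h2t : q ^ (2 * t) = 1 :=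
    calc q ^ (2 * t) = q ^ t * q ^ t := by rw [two_mul, zpow_add₀ hq0]
      _ = q ^ t * q ^ (-t) := by rw [← sub_eq_zero.mp h]
      _ = 1 := by rw [← zpow_add₀ hq0, add_neg_cancel, zpow_zero]
  have h4 : (4 : ℤ) ∣ 2 * t :=
    (Int.natCast_dvd_natCast.mpr hN).trans ((hq.zpow_eq_one_iff_dvd _).mp h2t)
  obtain ⟨s, rfl⟩ := ht
  omega

theorem IsPrimitiveRoot.sub_inv_ne_zero {K : Type*} [Field K] {q : K} {N : ℕ} [NeZero N]
    (hq : IsPrimitiveRoot q N) (hN : 4 ∣ N) : q - q⁻¹ ≠ 0 := by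
  simpa using hq.zpow_sub_zpow_neg_ne_zero_s12 hN odd_one

theorem qint_ne_zero_of_odd {q : ℂ} {N : ℕ} [NeZero N] (hq : IsPrimitiveRoot q N) (hN : 4 ∣ N)
    {t : ℤ} (ht : Odd t) : qint q t ≠ 0 :=
  div_ne_zero (hq.zpow_sub_zpow_neg_ne_zero_s12 hN ht) (hq.sub_inv_ne_zero hN)

theorem map_qint_of_apply_eq_zpow {q : ℂ} (hq : q - q⁻¹ ≠ 0) (σ : ℂ →+* ℂ) {u : ℤ}
    (hσ : σ q = q ^ u) (t : ℤ) : σ (qint q t) = qint q (t * u) / qint q u := by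
  simp only [qint, map_div₀, map_sub, map_zpow₀, map_inv₀, hσ, ← zpow_mul, ← zpow_neg,
    div_div_div_cancel_right₀ hq]
  ring_nf

theorem galois_transitivity_quantum_integers_super_general
    (x : ℕ) (k : ℕ) (hk : k = 2 ^ x - 1) (l : ℤ) (hl : Odd l) :
    ∀ m : ℕ, m ≤ k →
      qint (Complex.exp ((l : ℂ) * (Real.pi : ℂ) * Complex.I / (4 * ((k : ℂ) + 1))))
          (2 * (m : ℤ) + 1) ≠ 0 ∧
      ∃ σ : ℂ ≃+* ℂ, ∀ j : ℕ, j ≤ k →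
        σ (qint (Complex.exp ((l : ℂ) * (Real.pi : ℂ) * Complex.I / (4 * ((k : ℂ) + 1))))
            (2 * (j : ℤ) + 1)) =
          qint (Complex.exp ((l : ℂ) * (Real.pi : ℂ) * Complex.I / (4 * ((k : ℂ) + 1))))
              ((2 * (j : ℤ) + 1) * (2 * (m : ℤ) + 1)) /
            qint (Complex.exp ((l : ℂ) * (Real.pi : ℂ) * Complex.I / (4 * ((k : ℂ) + 1))))
              (2 * (m : ℤ) + 1) := by
  intro m _
  set q := Complex.exp ((l : ℂ) * (Real.pi : ℂ) * Complex.I / (4 * ((k : ℂ) + 1)))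
  have hN : 2 * (4 * (k + 1)) = 2 ^ (x + 3) := by
    rw [hk, Nat.sub_add_cancel Nat.one_le_two_pow]
    ring
  have hq : IsPrimitiveRoot q (2 ^ (x + 3)) := by
    have hcop : IsCoprime l ((2 ^ (x + 3) : ℕ) : ℤ) := by
      push_cast
      exact (Int.isCoprime_two_right.mpr hl).pow_right
    rw [← hN] at hcop ⊢
    simpa using Complex.isPrimitiveRoot_exp_mul_pi_mul_I_div (by omega) hcop
  have h4 : 4 ∣ 2 ^ (x + 3) := pow_dvd_pow 2 (by omega : 2 ≤ x + 3)
  have hu : Odd (2 * m + 1) := odd_two_mul_add_one m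
  obtain ⟨σ, hσ⟩ := hq.exists_ringEquiv_apply_eq_pow (hu.coprime_two_right.pow_right (x + 3))
  refine ⟨qint_ne_zero_of_odd hq h4 (by exact_mod_cast hu), σ, fun j _ => ?_⟩
  exact map_qint_of_apply_eq_zpow (hq.sub_inv_ne_zero h4) σ.toRingHom (by exact_mod_cast hσ) _

/-- Let `x ≥ 1`, `k = 2^x - 1`, `l` odd, and `q = exp(lπi/(4(k+1)))`
(a primitive `8(k+1)`-th root of unity).  Then for every `0 ≤ m ≤ k` the quantum integer
`[2m+1]_q` is nonzero and there is a field automorphism `σ` of `ℂ` with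
`σ([2j+1]_q) = [(2j+1)(2m+1)]_q / [2m+1]_q` for all `0 ≤ j ≤ k`. -/
theorem galois_transitivity_quantum_integers_super
    (x : ℕ) (hx : 1 ≤ x) (k : ℕ) (hk : k = 2 ^ x - 1) (l : ℤ) (hl : Odd l) :
    ∀ m : ℕ, m ≤ k →
      qint (Complex.exp ((l : ℂ) * (Real.pi : ℂ) * Complex.I / (4 * ((k : ℂ) + 1))))
          (2 * (m : ℤ) + 1) ≠ 0 ∧
      ∃ σ : ℂ ≃+* ℂ, ∀ j : ℕ, j ≤ k →
        σ (qint (Complex.exp ((l : ℂ) * (Real.pi : ℂ) * Complex.I / (4 * ((k : ℂ) + 1))))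
            (2 * (j : ℤ) + 1)) =
          qint (Complex.exp ((l : ℂ) * (Real.pi : ℂ) * Complex.I / (4 * ((k : ℂ) + 1))))
              ((2 * (j : ℤ) + 1) * (2 * (m : ℤ) + 1)) /
            qint (Complex.exp ((l : ℂ) * (Real.pi : ℂ) * Complex.I / (4 * ((k : ℂ) + 1))))
              (2 * (m : ℤ) + 1) :=
  galois_transitivity_quantum_integers_super_general x k hk l hl
end

section
/- Let k ≥ 3 be an odd integer. For integers 0 ≤ a, b, c ≤ k, define the SU(2)-level-k fusion coefficient N_{a,b}^c to be 1 if |a−b| ≤ c ≤ min(a+b, 2k−a−b) and c ≡ a+b (mod 2), and 0 otherwise. For each j with 0 ≤ j ≤ (k−1)/2 let M_j be the square natural-number matrix of size (k+1)/2 with entries (M_j)_{m,i} = N_{2j,2i}^{2m} for 0 ≤ m, i ≤ (k−1)/2. Then for every j with 1 ≤ j ≤ (k−1)/2 and every m with 0 ≤ m ≤ (k−1)/2 there exists an integer r ≥ 1 such that the (m,0) entry of the matrix power M_j^r is positive. -/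
/-- The SU(2)-level-`k` fusion coefficient `N_{a,b}^c`: it is `1` if
`|a-b| ≤ c ≤ min(a+b, 2k-a-b)` and `c ≡ a+b (mod 2)`, and `0` otherwise. -/
def fusionN (k a b c : ℕ) : ℕ :=
  if max a b - min a b ≤ c ∧ c ≤ min (a + b) (2 * k - a - b) ∧ (a + b) % 2 = c % 2 then 1 else 0

lemma fusionN_pos {k a b c : ℕ}
    (h : max a b - min a b ≤ c ∧ c ≤ min (a + b) (2 * k - a - b) ∧ (a + b) % 2 = c % 2) :
    0 < fusionN k a b c := by
  unfold fusionN
  rw [if_pos h]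
  exact one_pos

/-- Let `k ≥ 3` be odd, and for `0 ≤ j ≤ (k-1)/2` let `M_j` be the
`(k+1)/2 × (k+1)/2` matrix with entries `(M_j)_{m,i} = N_{2j,2i}^{2m}`.  Then for every
`1 ≤ j ≤ (k-1)/2` and every `0 ≤ m ≤ (k-1)/2` there is `r ≥ 1` with `(M_j^r)_{m,0} > 0`
(i.e. every nontrivial simple object of `C(sl₂,k)⁽⁰⁾` tensor-generates the category). -/
theorem fusion_matrix_power_positive
    (k : ℕ) (hk3 : 3 ≤ k) (hkodd : Odd k)
    (j m : Fin ((k + 1) / 2)) (hj : 1 ≤ (j : ℕ)) :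
    ∃ r : ℕ, 1 ≤ r ∧
      0 < (((Matrix.of fun m' i : Fin ((k + 1) / 2) =>
          fusionN k (2 * (j : ℕ)) (2 * (i : ℕ)) (2 * (m' : ℕ))) ^ r)
        m ⟨0, by omega⟩) := by
  obtain ⟨l, hl⟩ := hkodd
  have hn : (k + 1) / 2 = l + 1 := by omega
  set M : Matrix (Fin ((k + 1) / 2)) (Fin ((k + 1) / 2)) ℕ :=
    Matrix.of fun m' i : Fin ((k + 1) / 2) =>
      fusionN k (2 * (j : ℕ)) (2 * (i : ℕ)) (2 * (m' : ℕ)) with hM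
  set z : Fin ((k + 1) / 2) := ⟨0, by omega⟩ with hz
  have hjl : (j : ℕ) ≤ l := by have := j.isLt; omega
  -- an edge exists from `i` to `m'` under these conditions
  have hedge : ∀ i m' : Fin ((k + 1) / 2),
      (i : ℕ) + (m' : ℕ) + (j : ℕ) ≤ k → (j : ℕ) ≤ (i : ℕ) + (m' : ℕ) →
      (i : ℕ) ≤ (m' : ℕ) + (j : ℕ) → (m' : ℕ) ≤ (i : ℕ) + (j : ℕ) →
      0 < M m' i := by
    intro i m' h1 h2 h3 h4
    have hi := i.isLt
    have hm := m'.isLt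
    show 0 < fusionN k (2 * (j : ℕ)) (2 * (i : ℕ)) (2 * (m' : ℕ))
    exact fusionN_pos ⟨by omega, by omega, by omega⟩
  -- adding one step to a walk
  have hstep : ∀ (r : ℕ) (i m' : Fin ((k + 1) / 2)),
      0 < (M ^ r) i z → 0 < M m' i → 0 < (M ^ (r + 1)) m' z := by
    intro r i m' h1 h2
    rw [pow_succ', Matrix.mul_apply]
    exact Finset.sum_pos' (fun t _ => Nat.zero_le _)
      ⟨i, Finset.mem_univ i, Nat.mul_pos h2 h1⟩
  -- base: reach `j` in one step from `0`
  have hbase : 0 < (M ^ 1) j z := by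
    rw [pow_one]
    have hzv : (z : ℕ) = 0 := rfl
    exact hedge z j (by omega) (by omega) (by omega) (by omega)
  have main : ∀ mv : ℕ, ∀ m' : Fin ((k + 1) / 2), (m' : ℕ) = mv →
      ∃ r : ℕ, 1 ≤ r ∧ 0 < (M ^ r) m' z := by
    intro mv
    induction mv using Nat.strong_induction_on with
    | _ mv ih =>
      intro m' hm'
      have hmv : mv ≤ l := by have := m'.isLt; omega
      rcases Nat.lt_or_ge mv 1 with h0 | h1
      · -- m' = 0 : use the walk 0 → j → 0 of length 2
        have hmz : m' = z := by
          apply Fin.ext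
          simp only [hz]
          omega
        refine ⟨2, by norm_num, ?_⟩
        rw [hmz]
        have hzv : (z : ℕ) = 0 := rfl
        exact hstep 1 j z hbase (hedge j z (by omega) (by omega) (by omega) (by omega))
      · rcases Nat.lt_or_ge (j : ℕ) mv with hgt | hle
        · -- mv > j : reach mv - j, then one step to mv
          have hlt : mv - (j : ℕ) < (k + 1) / 2 := by omega
          obtain ⟨r, hr1, hr2⟩ := ih (mv - (j : ℕ)) (by omega) ⟨mv - (j : ℕ), hlt⟩ rfl
          have hiv : ((⟨mv - (j : ℕ), hlt⟩ : Fin ((k + 1) / 2)) : ℕ) = mv - (j : ℕ) := rfl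
          refine ⟨r + 1, by omega, hstep r _ m' hr2 ?_⟩
          exact hedge _ m' (by omega) (by omega) (by omega) (by omega)
        · -- 1 ≤ mv ≤ j : reach mv - 1, then two steps via t = j + 1 - mv
          have hlt1 : mv - 1 < (k + 1) / 2 := by omega
          have hltt : (j : ℕ) + 1 - mv < (k + 1) / 2 := by omega
          obtain ⟨r, hr1, hr2⟩ := ih (mv - 1) (by omega) ⟨mv - 1, hlt1⟩ rfl
          set t : Fin ((k + 1) / 2) := ⟨(j : ℕ) + 1 - mv, hltt⟩ with ht
          have htv : (t : ℕ) = (j : ℕ) + 1 - mv := rfl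
          have hiv : ((⟨mv - 1, hlt1⟩ : Fin ((k + 1) / 2)) : ℕ) = mv - 1 := rfl
          have step1 : 0 < (M ^ (r + 1)) t z :=
            hstep r _ t hr2 (hedge _ t (by omega) (by omega) (by omega) (by omega))
          refine ⟨r + 2, by omega, ?_⟩
          exact hstep (r + 1) t m' step1
            (hedge t m' (by omega) (by omega) (by omega) (by omega))
  exact main (m : ℕ) m rfl
end
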